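/- arXiv:1803.04970 — 7 statements merged into one kernel-verified Lean document; each statement's English description precedes it below -/
import Mathlib

section
/- Let (S, ℓ, R) be a refinement-space datum and I : S → ℕ an SFC index on it. Then for any refinement 𝒮 ⊆ S, the index I is injective on 𝒮: if E, E' ∈ 𝒮 and E ≠ E', then I(E) ≠ I(E'). -/
/-- A refinement-space datum: a set `S` with a level map `ℓ` and a children
assignment `R` satisfying the axioms (a)–(d). -/
structure RefinementDatum (S : Type*) where
  level : S → ℕ
  child : S → Set S
  root_unique : ∃! E : S, level E = 0
  level_child : ∀ ⦃E E' : S⦄, E' ∈ child E → level E' = level E + 1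
  child_disjoint : ∀ ⦃E E'' : S⦄, E ≠ E'' → child E ∩ child E'' = ∅
  child_cover : ∀ (l : ℕ) (E' : S), level E' = l + 1 → ∃ E : S, level E = l ∧ E' ∈ child E

/-- `D.Desc E E'` means `E'` is a descendant of `E` (reflexive–transitive
closure of the child relation). -/
def RefinementDatum.Desc {S : Type*} (D : RefinementDatum S) : S → S → Prop :=
  Relation.ReflTransGen (fun a b => b ∈ D.child a)

/-- A refinement: a subset obtained from `{root}` by finitely many
replacement steps `𝒮 ↦ (𝒮 \ {E}) ∪ R(E)` with `E ∈ 𝒮`. -/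
inductive IsRefinement {S : Type*} (D : RefinementDatum S) : Set S → Prop
  | root (r : S) (h : D.level r = 0) : IsRefinement D {r}
  | step (𝒮 : Set S) (E : S) (h : IsRefinement D 𝒮) (hE : E ∈ 𝒮) :
      IsRefinement D ((𝒮 \ {E}) ∪ D.child E)

/-- An SFC index on a refinement space. -/
def IsSFCIndex {S : Type*} (D : RefinementDatum S) (I : S → ℕ) : Prop :=
  Function.Injective (fun E => (I E, D.level E)) ∧
  (∀ E E' : S, D.Desc E E' → I E ≤ I E') ∧
  (∀ E Ehat : S, I E < I Ehat → ¬ D.Desc E Ehat →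
    ∀ E' : S, D.Desc E E' → I E ≤ I E' ∧ I E' < I Ehat)

section Aux

variable {S : Type*} (D : RefinementDatum S)

lemma aux_level_le_of_desc {a b : S} (h : D.Desc a b) : D.level a ≤ D.level b := by
  induction h with
  | refl => exact le_refl _
  | tail _ hbc ih => rw [D.level_child hbc]; omega

lemma aux_eq_of_desc_level {a b : S} (h : D.Desc a b) (hl : D.level a = D.level b) : a = b := by
  rcases h.cases_tail with rfl | ⟨c, hac, hcb⟩
  · rfl
  · have h1 := aux_level_le_of_desc D hac
    have h2 := D.level_child hcb
    omega

lemma aux_parent_unique {p q b : S} (hp : b ∈ D.child p) (hq : b ∈ D.child q) : p = q := by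
  by_contra hne
  have h := D.child_disjoint hne
  have : b ∈ D.child p ∩ D.child q := ⟨hp, hq⟩
  rw [h] at this
  exact this

lemma aux_refinement_antichain {𝒮 : Set S} (h : IsRefinement D 𝒮) :
    ∀ a ∈ 𝒮, ∀ b ∈ 𝒮, D.Desc a b → a = b := by
  induction h with
  | root r hr =>
    intro a ha b hb _
    simp only [Set.mem_singleton_iff] at ha hb
    rw [ha, hb]
  | step 𝒮 E h hE ih =>
    intro a ha b hb hab
    rcases ha with ⟨haS, haE⟩ | haC
    · rcases hb with ⟨hbS, _⟩ | hbC
      · exact ih a haS b hbS hab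
      · rcases hab.cases_tail with rfl | ⟨p, hap, hbp⟩
        · rfl
        · have hpE : p = E := aux_parent_unique D hbp hbC
          subst hpE
          exact absurd (ih a haS p hE hap) (by simpa using haE)
    · rcases hb with ⟨hbS, hbE⟩ | hbC
      · have hEb : D.Desc E b := (Relation.ReflTransGen.single haC).trans hab
        exact absurd (ih E hE b hbS hEb).symm (by simpa using hbE)
      · exact aux_eq_of_desc_level D hab
          (by rw [D.level_child haC, D.level_child hbC])

lemma aux_refinement_rooted {𝒮 : Set S} (h : IsRefinement D 𝒮) :
    ∃ r, ∀ a ∈ 𝒮, D.Desc r a := by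
  induction h with
  | root r _ =>
    refine ⟨r, fun a ha => ?_⟩
    simp only [Set.mem_singleton_iff] at ha
    rw [ha]
    exact Relation.ReflTransGen.refl
  | step 𝒮 E h hE ih =>
    obtain ⟨r, hr⟩ := ih
    refine ⟨r, fun a ha => ?_⟩
    rcases ha with ⟨haS, _⟩ | haC
    · exact hr a haS
    · exact (hr E hE).tail haC

lemma aux_diverge {r E E' : S} (h1 : D.Desc r E) :
    D.Desc r E' → ¬ D.Desc E E' → ¬ D.Desc E' E →
    ∃ A C C', C ∈ D.child A ∧ C' ∈ D.child A ∧ C ≠ C' ∧ D.Desc C E ∧ D.Desc C' E' := by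
  induction h1 using Relation.ReflTransGen.head_induction_on with
  | refl => intro h2 hn _; exact absurd h2 hn
  | head hrc hcE ih =>
    rename_i a c
    intro h2 hn hn'
    rcases h2.cases_head with rfl | ⟨c', hc', hc'E'⟩
    · exact absurd (Relation.ReflTransGen.head hrc hcE) hn'
    · by_cases hcc : c = c'
      · subst hcc
        exact ih hc'E' hn hn'
      · exact ⟨a, c, c', hrc, hc', hcc, hcE, hc'E'⟩

lemma aux_lt_helper {I : S → ℕ} (hI : IsSFCIndex D I) {A C C' E E' : S}
    (hC : C ∈ D.child A) (hC' : C' ∈ D.child A)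
    (hlt : I C < I C') (hE : D.Desc C E) (hE' : D.Desc C' E') : I E < I E' := by
  have hnd : ¬ D.Desc C C' := by
    intro h
    have : C = C' := aux_eq_of_desc_level D h
      (by rw [D.level_child hC, D.level_child hC'])
    rw [this] at hlt
    exact lt_irrefl _ hlt
  have h1 := (hI.2.2 C C' hlt hnd E hE).2
  have h2 := hI.2.1 C' E' hE'
  omega

end Aux

/-- An SFC index is injective on the leaves of any refinement. -/
theorem sfcIndex_injOn_refinement {S : Type*} (D : RefinementDatum S)
    (I : S → ℕ) (hI : IsSFCIndex D I) (𝒮 : Set S) (h𝒮 : IsRefinement D 𝒮) :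
    ∀ E ∈ 𝒮, ∀ E' ∈ 𝒮, E ≠ E' → I E ≠ I E' := by
  intro E hE E' hE' hne heq
  have hanti := aux_refinement_antichain D h𝒮
  have hnd1 : ¬ D.Desc E E' := fun h => hne (hanti E hE E' hE' h)
  have hnd2 : ¬ D.Desc E' E := fun h => hne (hanti E' hE' E hE h).symm
  obtain ⟨r, hr⟩ := aux_refinement_rooted D h𝒮
  obtain ⟨A, C, C', hC, hC', hCC, hCE, hC'E'⟩ :=
    aux_diverge D (hr E hE) (hr E' hE') hnd1 hnd2
  have hICC' : I C ≠ I C' := by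
    intro h
    apply hCC
    have := hI.1 (a₁ := C) (a₂ := C')
    simp only [Prod.mk.injEq] at this
    exact this ⟨h, by rw [D.level_child hC, D.level_child hC']⟩
  rcases lt_or_gt_of_ne hICC' with hlt | hlt
  · exact absurd heq (Nat.ne_of_lt (aux_lt_helper D hI hC hC' hlt hCE hC'E'))
  · exact absurd heq.symm (Nat.ne_of_lt (aux_lt_helper D hI hC' hC hlt hC'E' hCE))
end

section
/- Let K, P ≥ 1 and let f be a partition of the K trees {0,…,K−1} among P processes, i.e. f(p) ⊆ {0,…,K−1} for each p ∈ {0,…,P−1} with ⋃_p f(p) = {0,…,K−1}. Then f is a valid partition (induced by an SFC partition of a forest) if and only if the following three properties hold: (i) each nonempty f(p) is the interval of consecutive integers {k_p, k_p+1, …, K_p}; (ii) if p < q and f(p), f(q) are both nonempty, then K_p ≤ k_q; (iii) for p ≠ q, f(p) ∩ f(q) ⊆ {k_p, K_p}. -/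
/-!
Since leaves are ordered and both `t` and `π` are monotone, the fibre `π⁻¹(p)` is an interval of
leaves and its image under the monotone surjection `t` is an interval of trees; moreover a leaf of
an earlier process precedes every leaf of a later one, so trees of earlier processes come first,
and a tree shared by two processes must be an endpoint of each. Conversely, the pairs `(p, k)` with
`k ∈ f p`, listed lexicographically, are the leaves of a forest inducing `f`: reading off `k` is
monotone precisely because trees of earlier processes come first.
-/

/-- A partition `f` of the trees `{0,…,K-1}` among processes `{0,…,P-1}` is
valid if it is induced by an SFC partition of a forest: there are `N ≥ 1`
leaves in SFC order, a monotone surjection `t` assigning each leaf its tree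
and a monotone map `pr` assigning each leaf its process, with
`f p = t(pr⁻¹({p}))`. -/
def ValidPartition (K P : ℕ) (f : Fin P → Finset (Fin K)) : Prop :=
  ∃ N : ℕ, 1 ≤ N ∧ ∃ t : Fin N → Fin K, ∃ pr : Fin N → Fin P,
    Monotone t ∧ Function.Surjective t ∧ Monotone pr ∧
    ∀ p : Fin P, f p = (Finset.univ.filter fun i => pr i = p).image t

open Finset Function

variable {ι α β : Type*}

theorem Set.OrdConnected.image_of_monotone_of_surjective [LinearOrder ι] [PartialOrder β]
    {s : Set ι} (hs : s.OrdConnected) {t : ι → β} (ht : Monotone t) (hts : Surjective t) :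
    (t '' s).OrdConnected := by
  refine ⟨?_⟩
  rintro _ ⟨i, hi, rfl⟩ _ ⟨j, hj, rfl⟩ c ⟨hic, hcj⟩
  obtain ⟨k, rfl⟩ := hts c
  rcases lt_or_ge k i with hki | hik
  · exact ⟨i, hi, le_antisymm hic (ht hki.le)⟩
  rcases lt_or_ge j k with hjk | hkj
  · exact ⟨j, hj, le_antisymm (ht hjk.le) hcj⟩
  · exact ⟨k, hs.out hi hj ⟨hik, hkj⟩, rfl⟩

theorem Finset.eq_Icc_min'_max' [LinearOrder β] [LocallyFiniteOrder β] {s : Finset β}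
    (hs : (s : Set β).OrdConnected) (h : s.Nonempty) : s = Icc (s.min' h) (s.max' h) := by
  refine Subset.antisymm (fun b hb => mem_Icc.2 ⟨min'_le s b hb, le_max' s b hb⟩) fun b hb => ?_
  exact hs.out (min'_mem s h) (max'_mem s h) (mem_Icc.1 hb)

section Fiber

variable [Fintype ι] [DecidableEq α] [DecidableEq β]

def fiberImage (t : ι → β) (pr : ι → α) (p : α) : Finset β :=
  (univ.filter fun i => pr i = p).image t

theorem mem_fiberImage {t : ι → β} {pr : ι → α} {p : α} {b : β} :
    b ∈ fiberImage t pr p ↔ ∃ i, pr i = p ∧ t i = b := by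
  simp [fiberImage]

theorem coe_fiberImage (t : ι → β) (pr : ι → α) (p : α) :
    (fiberImage t pr p : Set β) = t '' (pr ⁻¹' {p}) := by
  ext; simp [fiberImage]

end Fiber

section Sorted

variable [LinearOrder α] [LinearOrder β]

def IsSortedFamily (f : α → Finset β) : Prop :=
  ∀ ⦃p q⦄, p < q → ∀ a ∈ f p, ∀ b ∈ f q, a ≤ b

theorem isSortedFamily_iff_max'_le_min' {f : α → Finset β} :
    IsSortedFamily f ↔ ∀ p q (hp : (f p).Nonempty) (hq : (f q).Nonempty),
      p < q → (f p).max' hp ≤ (f q).min' hq := by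
  refine ⟨fun hf p q hp hq hpq => hf hpq _ (max'_mem _ hp) _ (min'_mem _ hq),
    fun hf p q hpq a ha b hb => ?_⟩
  calc a ≤ (f p).max' ⟨a, ha⟩ := le_max' _ a ha
    _ ≤ (f q).min' ⟨b, hb⟩ := hf p q _ _ hpq
    _ ≤ b := min'_le _ b hb

theorem IsSortedFamily.eq_min'_or_eq_max' {f : α → Finset β} (hf : IsSortedFamily f)
    {p q : α} (hpq : p ≠ q) {k : β} (hk : k ∈ f p) (hkq : k ∈ f q) :
    k = (f p).min' ⟨k, hk⟩ ∨ k = (f p).max' ⟨k, hk⟩ := by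
  rcases hpq.lt_or_gt with h | h
  · exact .inr <| le_antisymm (le_max' _ k hk) (max'_le _ _ _ fun a ha => hf h a ha k hkq)
  · exact .inl <| le_antisymm (le_min' _ _ _ fun a ha => hf h k hkq a ha) (min'_le _ k hk)

theorem isSortedFamily_fiberImage [Fintype ι] [LinearOrder ι] {t : ι → β} {pr : ι → α}
    (ht : Monotone t) (hpr : Monotone pr) : IsSortedFamily (fiberImage t pr) := by
  intro p q hpq a ha b hb
  obtain ⟨i, rfl, rfl⟩ := mem_fiberImage.1 ha
  obtain ⟨j, rfl, rfl⟩ := mem_fiberImage.1 hb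
  exact ht (hpr.reflect_lt hpq).le

theorem ordConnected_fiberImage [Fintype ι] [LinearOrder ι] {t : ι → β} {pr : ι → α}
    (ht : Monotone t) (hts : Surjective t) (hpr : Monotone pr) (p : α) :
    (fiberImage t pr p : Set β).OrdConnected := by
  rw [coe_fiberImage]
  exact (Set.ordConnected_singleton.preimage_mono hpr).image_of_monotone_of_surjective ht hts

theorem IsSortedFamily.exists_fiberImage_eq [Fintype α] [Fintype β] {f : α → Finset β}
    (hf : IsSortedFamily f) (hcov : ∀ b, ∃ p, b ∈ f p) :
    ∃ N, ∃ t : Fin N → β, ∃ pr : Fin N → α,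
      Monotone t ∧ Surjective t ∧ Monotone pr ∧ ∀ p, f p = fiberImage t pr p := by
  set S := univ.filter fun x : α ×ₗ β => (ofLex x).2 ∈ f (ofLex x).1
  set e := S.orderIsoOfFin rfl
  have mem_f_iff (p : α) (b : β) : b ∈ f p ↔ ∃ i, ofLex (e i : α ×ₗ β) = (p, b) := by
    refine ⟨fun h => ?_, fun ⟨i, hi⟩ => ?_⟩
    · obtain ⟨i, hi⟩ := e.surjective ⟨toLex (p, b), by simpa [S] using h⟩
      exact ⟨i, by rw [hi]; rfl⟩
    · simpa [hi] using (mem_filter.1 (e i).2).2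
  refine ⟨S.card, fun i => (ofLex (e i : α ×ₗ β)).2, fun i => (ofLex (e i : α ×ₗ β)).1,
    fun i j hij => ?_, fun b => ?_, fun i j hij => Prod.Lex.monotone_fst _ _ (e.monotone hij),
    fun p => ?_⟩
  · rcases Prod.Lex.le_iff.1 (e.monotone hij) with h | ⟨-, h⟩
    · exact hf h _ (mem_filter.1 (e i).2).2 _ (mem_filter.1 (e j).2).2
    · exact h
  · obtain ⟨p, hp⟩ := hcov b
    obtain ⟨i, hi⟩ := (mem_f_iff p b).1 hp
    exact ⟨i, by simp [hi]⟩
  · ext b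
    simp [mem_fiberImage, mem_f_iff, Prod.ext_iff]

end Sorted

theorem validPartition_iff_general (K P : ℕ) (hK : 1 ≤ K)
    (f : Fin P → Finset (Fin K)) (hcov : ∀ k : Fin K, ∃ p, k ∈ f p) :
    ValidPartition K P f ↔
      ((∀ p (h : (f p).Nonempty),
          f p = Finset.Icc ((f p).min' h) ((f p).max' h)) ∧
       (∀ p q (hp : (f p).Nonempty) (hq : (f q).Nonempty),
          p < q → (f p).max' hp ≤ (f q).min' hq) ∧
       (∀ p q : Fin P, p ≠ q → ∀ k (hk : k ∈ f p), k ∈ f q →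
          k = (f p).min' ⟨k, hk⟩ ∨ k = (f p).max' ⟨k, hk⟩)) := by
  rw [← isSortedFamily_iff_max'_le_min']
  constructor
  · rintro ⟨N, -, t, pr, ht, hts, hpr, hf⟩
    obtain rfl : f = fiberImage t pr := funext hf
    exact ⟨fun p => eq_Icc_min'_max' (ordConnected_fiberImage ht hts hpr p),
      isSortedFamily_fiberImage ht hpr,
      fun _ _ hpq _ => (isSortedFamily_fiberImage ht hpr).eq_min'_or_eq_max' hpq⟩
  · rintro ⟨-, hsorted, -⟩
    obtain ⟨N, t, pr, ht, hts, hpr, hf⟩ := hsorted.exists_fiberImage_eq hcov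
    have hN : K ≤ N := by simpa using Fintype.card_le_of_surjective t hts
    exact ⟨N, hK.trans hN, t, pr, ht, hts, hpr, hf⟩

/-- Characterization of valid partitions by the three properties (i)–(iii). -/
theorem validPartition_iff (K P : ℕ) (hK : 1 ≤ K) (hP : 1 ≤ P)
    (f : Fin P → Finset (Fin K)) (hcov : ∀ k : Fin K, ∃ p, k ∈ f p) :
    ValidPartition K P f ↔
      ((∀ p (h : (f p).Nonempty),
          f p = Finset.Icc ((f p).min' h) ((f p).max' h)) ∧
       (∀ p q (hp : (f p).Nonempty) (hq : (f q).Nonempty),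
          p < q → (f p).max' hp ≤ (f q).min' hq) ∧
       (∀ p q : Fin P, p ≠ q → ∀ k (hk : k ∈ f p), k ∈ f q →
          k = (f p).min' ⟨k, hk⟩ ∨ k = (f p).max' ⟨k, hk⟩)) :=
  validPartition_iff_general K P hK f hcov
end

section
/- Let K, P ≥ 1 and let f(p) ⊆ {0,…,K−1} for p ∈ {0,…,P−1} satisfy properties (i), (ii), (iii) of a valid partition. If a tree k is shared between processes p and q with p < q, i.e. k ∈ f(p) ∩ f(q), then for every process r with p < r < q one has f(r) = {k} or f(r) = ∅. -/
/-- In a partition satisfying the valid-partition properties (i)–(iii), if a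
tree `k` is shared between processes `p < q`, then every process strictly in
between owns exactly `{k}` or nothing. -/
theorem between_shared_processes (K P : ℕ) (hK : 1 ≤ K) (hP : 1 ≤ P)
    (f : Fin P → Finset (Fin K))
    (hi : ∀ p (h : (f p).Nonempty),
        f p = Finset.Icc ((f p).min' h) ((f p).max' h))
    (hii : ∀ p q (hp : (f p).Nonempty) (hq : (f q).Nonempty),
        p < q → (f p).max' hp ≤ (f q).min' hq)
    (hiii : ∀ p q : Fin P, p ≠ q → ∀ k (hk : k ∈ f p), k ∈ f q →
        k = (f p).min' ⟨k, hk⟩ ∨ k = (f p).max' ⟨k, hk⟩) :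
    ∀ (p q r : Fin P) (k : Fin K), p < q → k ∈ f p → k ∈ f q →
      p < r → r < q → (f r = {k} ∨ f r = ∅) := by
  intro p q r k hpq hkp hkq hpr hrq
  rcases (f r).eq_empty_or_nonempty with he | hne
  · exact Or.inr he
  left
  have hp : (f p).Nonempty := ⟨k, hkp⟩
  have hq : (f q).Nonempty := ⟨k, hkq⟩
  have h1 : k ≤ (f p).max' hp := Finset.le_max' _ _ hkp
  have h2 : (f q).min' hq ≤ k := Finset.min'_le _ _ hkq
  have h3 := hii p r hp hne hpr
  have h4 := hii r q hne hq hrq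
  have h5 : (f r).min' hne ≤ (f r).max' hne := Finset.min'_le _ _ ((f r).max'_mem hne)
  have hmin : (f r).min' hne = k := le_antisymm (le_trans h5 (le_trans h4 h2)) (le_trans h1 h3)
  have hmax : (f r).max' hne = k := le_antisymm (le_trans h4 h2) (le_trans h1 (le_trans h3 h5))
  rw [hi r hne, hmin, hmax, Finset.Icc_self]
end

section
/- Let f be a valid partition of K trees among P processes with extended first and last tree indices k_p, K_p ∈ ℤ and offset array O as defined. Then for every p < P: k_p = O[p] if O[p] ≥ 0 and k_p = −O[p] − 1 if O[p] < 0; moreover K_p = |O[p+1]| − 1. -/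
/-!
Every `k_p` is nonnegative, so the sign of `O[p]` tells which of its two encodings was used.
For `K_p`, let `q` be the last nonempty process with `q ≤ p`, so that `K_p = K_q`. Covering and the
ordering of the blocks leave no tree strictly between `K_q` and the first tree of the next nonempty
process (`K_q ⩿ k`), so that process starts at `K_q` when its first tree is shared and at `K_q + 1`
otherwise, while an empty process `p + 1` starts at `K_q + 1` by definition; in every case
`|O[p+1]| = K_q + 1`. When `p + 1 = P`, covering forces `K_q = K - 1`. If no process up to `p` is
nonempty, `K_p = -1` and covering makes the next process start at tree `0`.
-/

def SharedWith {K P : ℕ} (f : Fin P → Finset (Fin K)) (kk : Fin P → ℤ)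
    (p : Fin P) : Prop :=
  ∃ q : Fin P, q < p ∧ (f q).Nonempty ∧ (∀ r : Fin P, q < r → r < p → f r = ∅) ∧
    ∃ k ∈ f q, ((k : ℕ) : ℤ) = kk p

section Blocks

variable {ι α : Type*} [LinearOrder ι] {f : ι → Finset α}

def IsPrevNonempty (f : ι → Finset α) (q p : ι) : Prop :=
  q < p ∧ (f q).Nonempty ∧ ∀ r, q < r → r < p → f r = ∅

theorem IsPrevNonempty.unique {q q' p : ι} (h : IsPrevNonempty f q p)
    (h' : IsPrevNonempty f q' p) : q = q' := by
  rcases lt_trichotomy q q' with hlt | heq | hgt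
  · exact absurd (h.2.2 q' hlt h'.1) h'.2.1.ne_empty
  · exact heq
  · exact absurd (h'.2.2 q hgt h.1) h.2.1.ne_empty

theorem exists_isPrevNonempty_or_forall_lt_eq_empty [Finite ι] (f : ι → Finset α) (p : ι) :
    (∃ q, IsPrevNonempty f q p) ∨ ∀ r < p, f r = ∅ := by
  by_cases h : ∃ r < p, (f r).Nonempty
  · obtain ⟨q, ⟨hqp, hq⟩, hmax⟩ :=
      Set.exists_max_image {r | r < p ∧ (f r).Nonempty} id (Set.toFinite _) h
    refine .inl ⟨q, hqp, hq, fun r hqr hrp => ?_⟩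
    exact Finset.not_nonempty_iff_eq_empty.mp fun hr => (hmax r ⟨hrp, hr⟩).not_gt hqr
  · push Not at h
    exact .inr h

theorem isPrevNonempty_of_covBy {p p' : ι} (hpp' : p ⋖ p') (hp : (f p).Nonempty) :
    IsPrevNonempty f p p' :=
  ⟨hpp'.lt, hp, fun _ hpr hrp' => absurd (hpp'.le_of_lt hrp') hpr.not_ge⟩

theorem IsPrevNonempty.of_covBy {q p p' : ι} (h : IsPrevNonempty f q p) (hpp' : p ⋖ p')
    (hp : f p = ∅) : IsPrevNonempty f q p' :=
  ⟨h.1.trans hpp'.lt, h.2.1, fun r hqr hrp' =>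
    (hpp'.le_of_lt hrp').lt_or_eq.elim (h.2.2 r hqr) (· ▸ hp)⟩

variable [LinearOrder α]

def BlocksOrdered (f : ι → Finset α) : Prop :=
  ∀ p q (hp : (f p).Nonempty) (hq : (f q).Nonempty), p < q → (f p).max' hp ≤ (f q).min' hq

namespace BlocksOrdered

theorem le_max' (hf : BlocksOrdered f) {s q : ι} (hq : (f q).Nonempty) {k : α} (hk : k ∈ f s)
    (hsq : s ≤ q) : k ≤ (f q).max' hq := by
  rcases hsq.lt_or_eq with hsq | rfl
  · exact ((f s).le_max' k hk).trans <| (hf s q ⟨k, hk⟩ hq hsq).trans <| (f q).min'_le_max' hq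
  · exact (f s).le_max' k hk

theorem min'_le (hf : BlocksOrdered f) {p s : ι} (hp : (f p).Nonempty) {k : α} (hk : k ∈ f s)
    (hps : p ≤ s) : (f p).min' hp ≤ k := by
  rcases hps.lt_or_eq with hps | rfl
  · exact ((f p).min'_le_max' hp).trans <| (hf p s hp ⟨k, hk⟩ hps).trans <| (f s).min'_le k hk
  · exact (f p).min'_le k hk

theorem le_max'_of_forall_gt_eq_empty (hf : BlocksOrdered f) (hcov : ∀ k, ∃ p, k ∈ f p) {q : ι}
    (hq : (f q).Nonempty) (hafter : ∀ r, q < r → f r = ∅) (k : α) : k ≤ (f q).max' hq := by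
  obtain ⟨s, hs⟩ := hcov k
  refine hf.le_max' hq hs (le_of_not_gt fun hqs => ?_)
  simp [hafter s hqs] at hs

theorem min'_le_of_forall_lt_eq_empty (hf : BlocksOrdered f) (hcov : ∀ k, ∃ p, k ∈ f p)
    {p : ι} (hp : (f p).Nonempty) (hbefore : ∀ r < p, f r = ∅) (k : α) : (f p).min' hp ≤ k := by
  obtain ⟨s, hs⟩ := hcov k
  refine hf.min'_le hp hs (le_of_not_gt fun hsp => ?_)
  simp [hbefore s hsp] at hs

theorem max'_wcovBy_min' (hf : BlocksOrdered f) (hcov : ∀ k, ∃ p, k ∈ f p) {q p : ι}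
    (h : IsPrevNonempty f q p) (hp : (f p).Nonempty) : (f q).max' h.2.1 ⩿ (f p).min' hp := by
  refine ⟨hf q p h.2.1 hp h.1, fun k hqk hkp => ?_⟩
  obtain ⟨s, hs⟩ := hcov k
  rcases le_or_gt s q with hsq | hqs
  · exact (hf.le_max' h.2.1 hs hsq).not_gt hqk
  rcases lt_or_ge s p with hsp | hps
  · simp [h.2.2 s hqs hsp] at hs
  · exact (hf.min'_le hp hs hps).not_gt hkp

end BlocksOrdered

end Blocks

section Offsets

variable {K P : ℕ} {f : Fin P → Finset (Fin K)} {kk KK : Fin P → ℤ}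

structure IsExtendedBounds (f : Fin P → Finset (Fin K)) (kk KK : Fin P → ℤ) : Prop where
  kk_eq : ∀ p (h : (f p).Nonempty), kk p = (((f p).min' h : ℕ) : ℤ)
  KK_eq : ∀ p (h : (f p).Nonempty), KK p = (((f p).max' h : ℕ) : ℤ)
  of_forall_lt_eq_empty : ∀ p, f p = ∅ → (∀ q < p, f q = ∅) → kk p = 0 ∧ KK p = -1
  of_isPrevNonempty : ∀ p q, f p = ∅ → IsPrevNonempty f q p → kk p = KK q + 1 ∧ KK p = KK q

structure IsOffsetArray (f : Fin P → Finset (Fin K)) (kk : Fin P → ℤ) (O : ℕ → ℤ) : Prop where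
  last : O P = K
  of_not_sharedWith : ∀ p : Fin P, (f p = ∅ ∨ ¬ SharedWith f kk p) → O p = kk p
  of_sharedWith : ∀ p : Fin P, f p ≠ ∅ → SharedWith f kk p → O p = -kk p - 1

theorem sharedWith_iff {p : Fin P} :
    SharedWith f kk p ↔ ∃ q, IsPrevNonempty f q p ∧ ∃ k ∈ f q, ((k : ℕ) : ℤ) = kk p := by
  simp only [SharedWith, IsPrevNonempty, and_assoc]

namespace IsExtendedBounds

theorem KK_nonneg_of_nonempty (hb : IsExtendedBounds f kk KK) {q : Fin P} (hq : (f q).Nonempty) :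
    0 ≤ KK q := by
  rw [hb.KK_eq q hq]
  positivity

theorem kk_nonneg (hb : IsExtendedBounds f kk KK) (p : Fin P) : 0 ≤ kk p := by
  by_cases hp : (f p).Nonempty
  · rw [hb.kk_eq p hp]
    positivity
  have hp : f p = ∅ := Finset.not_nonempty_iff_eq_empty.mp hp
  rcases exists_isPrevNonempty_or_forall_lt_eq_empty f p with ⟨q, hq⟩ | hbefore
  · have := hb.KK_nonneg_of_nonempty hq.2.1
    rw [(hb.of_isPrevNonempty p q hp hq).1]
    omega
  · rw [(hb.of_forall_lt_eq_empty p hp hbefore).1]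

theorem kk_eq_of_sharedWith (hb : IsExtendedBounds f kk KK) (hf : BlocksOrdered f) {q p : Fin P}
    (hq : IsPrevNonempty f q p) (hp : (f p).Nonempty) (hsh : SharedWith f kk p) :
    kk p = KK q := by
  obtain ⟨q', hq', k, hk, hkp⟩ := sharedWith_iff.mp hsh
  obtain rfl := hq'.unique hq
  have hk_min : k = (f p).min' hp := Fin.ext (by have := hb.kk_eq p hp; omega)
  have hmax_min : (f q').max' hq'.2.1 = (f p).min' hp :=
    le_antisymm (hf q' p hq'.2.1 hp hq'.1) (hk_min ▸ (f q').le_max' k hk)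
  rw [hb.kk_eq p hp, hb.KK_eq q' hq'.2.1, hmax_min]

theorem kk_eq_of_not_sharedWith (hb : IsExtendedBounds f kk KK) (hf : BlocksOrdered f)
    (hcov : ∀ k, ∃ p, k ∈ f p) {q p : Fin P} (hq : IsPrevNonempty f q p)
    (h : f p = ∅ ∨ ¬ SharedWith f kk p) : kk p = KK q + 1 := by
  by_cases hpe : f p = ∅
  · exact (hb.of_isPrevNonempty p q hpe hq).1
  have hp : (f p).Nonempty := Finset.nonempty_iff_ne_empty.mpr hpe
  have hsh : ¬ SharedWith f kk p := h.resolve_left hpe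
  rw [hb.kk_eq p hp, hb.KK_eq q hq.2.1]
  rcases (hf.max'_wcovBy_min' hcov hq hp).eq_or_covBy with heq | hcovBy
  · refine absurd (sharedWith_iff.mpr ⟨q, hq, _, (f q).max'_mem hq.2.1, ?_⟩) hsh
    rw [hb.kk_eq p hp, heq]
  · rw [← Nat.covBy_iff_add_one_eq.mp (Fin.covBy_iff.mp hcovBy), Nat.cast_succ]

theorem KK_eq_of_forall_gt_eq_empty (hb : IsExtendedBounds f kk KK) (hf : BlocksOrdered f)
    (hcov : ∀ k, ∃ p, k ∈ f p) {p : Fin P} (hafter : ∀ r, p < r → f r = ∅) : KK p = K - 1 := by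
  have of_nonempty : ∀ q (hq : (f q).Nonempty), (∀ r, q < r → f r = ∅) → KK q = K - 1 := by
    intro q hq hafter
    have hK : 0 < K := Fin.pos ((f q).max' hq)
    have hlast : K - 1 ≤ ((f q).max' hq : ℕ) :=
      hf.le_max'_of_forall_gt_eq_empty hcov hq hafter ⟨K - 1, by omega⟩
    have := ((f q).max' hq).isLt
    rw [hb.KK_eq q hq]
    omega
  by_cases hp : (f p).Nonempty
  · exact of_nonempty p hp hafter
  have hp : f p = ∅ := Finset.not_nonempty_iff_eq_empty.mp hp
  rcases exists_isPrevNonempty_or_forall_lt_eq_empty f p with ⟨q, hq⟩ | hbefore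
  · rw [(hb.of_isPrevNonempty p q hp hq).2]
    refine of_nonempty q hq.2.1 fun r hqr => ?_
    rcases lt_trichotomy r p with hrp | rfl | hpr
    exacts [hq.2.2 r hqr hrp, hp, hafter r hpr]
  · have hall : ∀ r, f r = ∅ := fun r =>
      (lt_trichotomy r p).elim (hbefore r) fun h => h.elim (· ▸ hp) (hafter r)
    have hK : K = 0 := by
      refine Nat.eq_zero_of_not_pos fun hK => ?_
      obtain ⟨r, hr⟩ := hcov ⟨0, hK⟩
      simp [hall r] at hr
    rw [(hb.of_forall_lt_eq_empty p hp hbefore).2, hK]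
    simp

end IsExtendedBounds

namespace IsOffsetArray

variable {O : ℕ → ℤ}

theorem eq_or_eq (hO : IsOffsetArray f kk O) (p : Fin P) : O p = kk p ∨ O p = -kk p - 1 := by
  by_cases h : f p = ∅ ∨ ¬ SharedWith f kk p
  · exact .inl (hO.of_not_sharedWith p h)
  · push Not at h
    exact .inr (hO.of_sharedWith p h.1.ne_empty h.2)

theorem abs_eq_of_isPrevNonempty (hO : IsOffsetArray f kk O) (hb : IsExtendedBounds f kk KK)
    (hf : BlocksOrdered f) (hcov : ∀ k, ∃ p, k ∈ f p) {q p : Fin P} (hq : IsPrevNonempty f q p) :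
    |O p| = KK q + 1 := by
  have := hb.KK_nonneg_of_nonempty hq.2.1
  by_cases h : f p = ∅ ∨ ¬ SharedWith f kk p
  · rw [hO.of_not_sharedWith p h, hb.kk_eq_of_not_sharedWith hf hcov hq h, abs_of_nonneg (by omega)]
  · push Not at h
    rw [hO.of_sharedWith p h.1.ne_empty h.2, hb.kk_eq_of_sharedWith hf hq h.1 h.2,
      abs_of_neg (by omega)]
    ring

theorem eq_zero_of_forall_lt_eq_empty (hO : IsOffsetArray f kk O) (hb : IsExtendedBounds f kk KK)
    (hf : BlocksOrdered f) (hcov : ∀ k, ∃ p, k ∈ f p) {p : Fin P} (hbefore : ∀ r < p, f r = ∅) :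
    O p = 0 := by
  have hsh : ¬ SharedWith f kk p := fun ⟨q, hqp, hq, _⟩ => hq.ne_empty (hbefore q hqp)
  rw [hO.of_not_sharedWith p (.inr hsh)]
  by_cases hp : (f p).Nonempty
  · have hfirst : ((f p).min' hp : ℕ) ≤ 0 :=
      hf.min'_le_of_forall_lt_eq_empty hcov hp hbefore ⟨0, Fin.pos ((f p).min' hp)⟩
    rw [hb.kk_eq p hp]
    omega
  · exact (hb.of_forall_lt_eq_empty p (Finset.not_nonempty_iff_eq_empty.mp hp) hbefore).1

theorem abs_eq_of_covBy (hO : IsOffsetArray f kk O) (hb : IsExtendedBounds f kk KK)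
    (hf : BlocksOrdered f) (hcov : ∀ k, ∃ p, k ∈ f p) {p p' : Fin P} (hpp' : p ⋖ p') :
    |O p'| = KK p + 1 := by
  by_cases hp : (f p).Nonempty
  · exact hO.abs_eq_of_isPrevNonempty hb hf hcov (isPrevNonempty_of_covBy hpp' hp)
  have hp : f p = ∅ := Finset.not_nonempty_iff_eq_empty.mp hp
  rcases exists_isPrevNonempty_or_forall_lt_eq_empty f p with ⟨q, hq⟩ | hbefore
  · rw [hO.abs_eq_of_isPrevNonempty hb hf hcov (hq.of_covBy hpp' hp),
      (hb.of_isPrevNonempty p q hp hq).2]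
  · have hbefore' : ∀ r < p', f r = ∅ := fun r hrp' =>
      (hpp'.le_of_lt hrp').lt_or_eq.elim (hbefore r) (· ▸ hp)
    rw [hO.eq_zero_of_forall_lt_eq_empty hb hf hcov hbefore',
      (hb.of_forall_lt_eq_empty p hp hbefore).2]
    simp

end IsOffsetArray

end Offsets

theorem offset_array_recovers_partition_general (K P : ℕ)
    (f : Fin P → Finset (Fin K))
    (hcov : ∀ k : Fin K, ∃ p, k ∈ f p)
    (hii : ∀ p q (hp : (f p).Nonempty) (hq : (f q).Nonempty),
        p < q → (f p).max' hp ≤ (f q).min' hq)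
    (kk KK : Fin P → ℤ)
    (hkk : ∀ p (h : (f p).Nonempty), kk p = (((f p).min' h : ℕ) : ℤ))
    (hKK : ∀ p (h : (f p).Nonempty), KK p = (((f p).max' h : ℕ) : ℤ))
    (hempty0 : ∀ p : Fin P, f p = ∅ → (∀ q : Fin P, q < p → f q = ∅) →
        kk p = 0 ∧ KK p = -1)
    (hemptyq : ∀ p q : Fin P, f p = ∅ → q < p → (f q).Nonempty →
        (∀ r : Fin P, q < r → r < p → f r = ∅) → kk p = KK q + 1 ∧ KK p = KK q)
    (O : ℕ → ℤ)
    (hOP : O P = (K : ℤ))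
    (hO1 : ∀ p : Fin P, (f p = ∅ ∨ ¬ SharedWith f kk p) → O (p : ℕ) = kk p)
    (hO2 : ∀ p : Fin P, f p ≠ ∅ → SharedWith f kk p → O (p : ℕ) = -(kk p) - 1) :
    ∀ p : Fin P,
      (0 ≤ O (p : ℕ) → kk p = O (p : ℕ)) ∧
      (O (p : ℕ) < 0 → kk p = -(O (p : ℕ)) - 1) ∧
      KK p = |O ((p : ℕ) + 1)| - 1 := by
  have hb : IsExtendedBounds f kk KK :=
    ⟨hkk, hKK, hempty0, fun p q hp hq => hemptyq p q hp hq.1 hq.2.1 hq.2.2⟩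
  have hO : IsOffsetArray f kk O := ⟨hOP, hO1, hO2⟩
  intro p
  have hkk_nonneg := hb.kk_nonneg p
  have hOp := hO.eq_or_eq p
  refine ⟨fun _ => by omega, fun _ => by omega, ?_⟩
  rcases Nat.lt_or_ge ((p : ℕ) + 1) P with hlt | hge
  · have hcovBy : p ⋖ ⟨p + 1, hlt⟩ := by simp [Fin.covBy_iff]
    rw [hO.abs_eq_of_covBy hb hii hcov hcovBy]
    ring
  · have hafter : ∀ r, p < r → f r = ∅ := fun r hpr =>
      absurd r.isLt (by have : (p : ℕ) < r := hpr; omega)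
    rw [show (p : ℕ) + 1 = P by omega, hO.last, abs_of_nonneg (by positivity),
      hb.KK_eq_of_forall_gt_eq_empty hii hcov hafter]

/-- Recovering the extended first and last tree indices from the offset
array: `k_p = O[p]` if `O[p] ≥ 0`, `k_p = -O[p] - 1` if `O[p] < 0`, and
`K_p = |O[p+1]| - 1`. -/
theorem offset_array_recovers_partition (K P : ℕ) (hK : 1 ≤ K) (hP : 1 ≤ P)
    (f : Fin P → Finset (Fin K))
    (hcov : ∀ k : Fin K, ∃ p, k ∈ f p)
    (hi : ∀ p (h : (f p).Nonempty),
        f p = Finset.Icc ((f p).min' h) ((f p).max' h))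
    (hii : ∀ p q (hp : (f p).Nonempty) (hq : (f q).Nonempty),
        p < q → (f p).max' hp ≤ (f q).min' hq)
    (hiii : ∀ p q : Fin P, p ≠ q → ∀ k (hk : k ∈ f p), k ∈ f q →
        k = (f p).min' ⟨k, hk⟩ ∨ k = (f p).max' ⟨k, hk⟩)
    (kk KK : Fin P → ℤ)
    (hkk : ∀ p (h : (f p).Nonempty), kk p = (((f p).min' h : ℕ) : ℤ))
    (hKK : ∀ p (h : (f p).Nonempty), KK p = (((f p).max' h : ℕ) : ℤ))
    (hempty0 : ∀ p : Fin P, f p = ∅ → (∀ q : Fin P, q < p → f q = ∅) →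
        kk p = 0 ∧ KK p = -1)
    (hemptyq : ∀ p q : Fin P, f p = ∅ → q < p → (f q).Nonempty →
        (∀ r : Fin P, q < r → r < p → f r = ∅) → kk p = KK q + 1 ∧ KK p = KK q)
    (O : ℕ → ℤ)
    (hOP : O P = (K : ℤ))
    (hO1 : ∀ p : Fin P, (f p = ∅ ∨ ¬ SharedWith f kk p) → O (p : ℕ) = kk p)
    (hO2 : ∀ p : Fin P, f p ≠ ∅ → SharedWith f kk p → O (p : ℕ) = -(kk p) - 1) :
    ∀ p : Fin P,
      (0 ≤ O (p : ℕ) → kk p = O (p : ℕ)) ∧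
      (O (p : ℕ) < 0 → kk p = -(O (p : ℕ)) - 1) ∧
      KK p = |O ((p : ℕ) + 1)| - 1 :=
  offset_array_recovers_partition_general K P f hcov hii kk KK hkk hKK hempty0 hemptyq O hOP hO1 hO2
end

section
/- Let f be a valid partition of K trees among P processes with extended first tree indices k_p ∈ ℤ and offset array O as defined. Then the number n_p = |f(p)| of local trees of process p satisfies n_p = |O[p+1]| − k_p for every p < P. -/
section
variable {K P : ℕ} {f : Fin P → Finset (Fin K)}

lemma interval_card
    (hi : ∀ p (h : (f p).Nonempty), f p = Finset.Icc ((f p).min' h) ((f p).max' h))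
    (p : Fin P) (h : (f p).Nonempty) :
    ((f p).card : ℤ) = (((f p).max' h : ℕ) : ℤ) - (((f p).min' h : ℕ) : ℤ) + 1 := by
  have hmm : ((f p).min' h : ℕ) ≤ ((f p).max' h : ℕ) := Finset.min'_le _ _ ((f p).max'_mem h)
  have hc : (f p).card = ((f p).max' h : ℕ) + 1 - ((f p).min' h : ℕ) := by
    conv_lhs => rw [hi p h]
    exact Fin.card_Icc _ _
  omega

lemma no_gap
    (hcov : ∀ k : Fin K, ∃ p, k ∈ f p)
    (hii : ∀ p q (hp : (f p).Nonempty) (hq : (f q).Nonempty),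
        p < q → (f p).max' hp ≤ (f q).min' hq)
    (q r : Fin P) (hqr : q < r) (hq : (f q).Nonempty) (hr : (f r).Nonempty)
    (hbet : ∀ s, q < s → s < r → f s = ∅) :
    (((f r).min' hr : ℕ)) ≤ ((f q).max' hq : ℕ) + 1 := by
  by_contra hgap
  push_neg at hgap
  have hlt : ((f q).max' hq : ℕ) + 1 < K := lt_of_lt_of_le hgap (le_of_lt ((f r).min' hr).isLt)
  set m : Fin K := ⟨((f q).max' hq : ℕ) + 1, hlt⟩ with hm
  have hmv : (m : ℕ) = ((f q).max' hq : ℕ) + 1 := rfl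
  obtain ⟨s, hs⟩ := hcov m
  have hsne : (f s).Nonempty := ⟨m, hs⟩
  rcases lt_trichotomy s r with hsr | hsr | hsr
  · rcases lt_trichotomy s q with hsq | hsq | hsq
    · have h2 : ((m : ℕ)) ≤ ((f s).max' hsne : ℕ) := Finset.le_max' _ _ hs
      have h3 : ((f s).max' hsne : ℕ) ≤ ((f q).min' hq : ℕ) := hii s q hsne hq hsq
      have h4 : ((f q).min' hq : ℕ) ≤ ((f q).max' hq : ℕ) := Finset.min'_le _ _ ((f q).max'_mem hq)
      omega
    · rw [hsq] at hs
      have h2 : ((m : ℕ)) ≤ ((f q).max' hq : ℕ) := Finset.le_max' _ _ hs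
      omega
    · have := hbet s hsq hsr
      rw [this] at hs; exact absurd hs (Finset.notMem_empty _)
  · rw [hsr] at hs
    have h1 : ((f r).min' hr : ℕ) ≤ (m : ℕ) := Finset.min'_le _ _ hs
    omega
  · have h1 : ((f s).min' hsne : ℕ) ≤ (m : ℕ) := Finset.min'_le _ _ hs
    have h3 : ((f r).max' hr : ℕ) ≤ ((f s).min' hsne : ℕ) := hii r s hr hsne hsr
    have h4 : ((f r).min' hr : ℕ) ≤ ((f r).max' hr : ℕ) := Finset.min'_le _ _ ((f r).max'_mem hr)
    omega

lemma last_max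
    (hcov : ∀ k : Fin K, ∃ p, k ∈ f p)
    (hii : ∀ p q (hp : (f p).Nonempty) (hq : (f q).Nonempty),
        p < q → (f p).max' hp ≤ (f q).min' hq)
    (hK : 1 ≤ K) (q : Fin P) (hq : (f q).Nonempty)
    (hlast : ∀ r, q < r → f r = ∅) : ((f q).max' hq : ℕ) = K - 1 := by
  have h1 : ((f q).max' hq : ℕ) < K := ((f q).max' hq).isLt
  obtain ⟨s, hs⟩ := hcov ⟨K - 1, by omega⟩
  have hsne : (f s).Nonempty := ⟨_, hs⟩
  have h2 : K - 1 ≤ ((f s).max' hsne : ℕ) := Finset.le_max' _ _ hs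
  rcases lt_trichotomy s q with h | h | h
  · have h3 : ((f s).max' hsne : ℕ) ≤ ((f q).min' hq : ℕ) := hii s q hsne hq h
    have h4 : ((f q).min' hq : ℕ) ≤ ((f q).max' hq : ℕ) :=
      Finset.min'_le _ _ ((f q).max'_mem hq)
    omega
  · rw [h] at hs
    have h2' : K - 1 ≤ ((f q).max' hq : ℕ) := Finset.le_max' _ _ hs
    omega
  · rw [hlast s h] at hs; exact absurd hs (Finset.notMem_empty _)

lemma first_min
    (hcov : ∀ k : Fin K, ∃ p, k ∈ f p)
    (hii : ∀ p q (hp : (f p).Nonempty) (hq : (f q).Nonempty),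
        p < q → (f p).max' hp ≤ (f q).min' hq)
    (hK : 1 ≤ K) (r : Fin P) (hr : (f r).Nonempty)
    (hfirst : ∀ s, s < r → f s = ∅) : ((f r).min' hr : ℕ) = 0 := by
  obtain ⟨s, hs⟩ := hcov ⟨0, by omega⟩
  have hsne : (f s).Nonempty := ⟨_, hs⟩
  have h2 : ((f s).min' hsne : ℕ) ≤ 0 := Finset.min'_le _ _ hs
  rcases lt_trichotomy s r with h | h | h
  · rw [hfirst s h] at hs; exact absurd hs (Finset.notMem_empty _)
  · rw [h] at hs
    have h2' : ((f r).min' hr : ℕ) ≤ 0 := Finset.min'_le _ _ hs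
    omega
  · have h3 : ((f r).max' hr : ℕ) ≤ ((f s).min' hsne : ℕ) := hii r s hr hsne h
    have h4 : ((f r).min' hr : ℕ) ≤ ((f r).max' hr : ℕ) :=
      Finset.min'_le _ _ ((f r).max'_mem hr)
    omega

lemma largest_below (f : Fin P → Finset (Fin K)) (p : Fin P) :
    (∀ q, q < p → f q = ∅) ∨
    ∃ q, q < p ∧ (f q).Nonempty ∧ ∀ r, q < r → r < p → f r = ∅ := by
  classical
  set S : Finset (Fin P) := Finset.univ.filter (fun q => q < p ∧ (f q).Nonempty) with hS
  by_cases h : S.Nonempty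
  · right
    have hmem := S.max'_mem h
    simp only [hS, Finset.mem_filter, Finset.mem_univ, true_and] at hmem
    refine ⟨S.max' h, hmem.1, hmem.2, ?_⟩
    intro r h1 h2
    by_contra hne
    have hrS : r ∈ S := by
      simp only [hS, Finset.mem_filter, Finset.mem_univ, true_and]
      exact ⟨h2, Finset.nonempty_iff_ne_empty.mpr hne⟩
    exact absurd (Finset.le_max' S r hrS) (not_le.mpr h1)
  · left
    intro q hq
    by_contra hne
    exact h ⟨q, by
      simp only [hS, Finset.mem_filter, Finset.mem_univ, true_and]
      exact ⟨hq, Finset.nonempty_iff_ne_empty.mpr hne⟩⟩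

lemma shared_witness {kk : Fin P → ℤ} {p q : Fin P}
    (hq : q < p) (hqne : (f q).Nonempty) (hbet : ∀ r, q < r → r < p → f r = ∅)
    (h : SharedWith f kk p) : ∃ k ∈ f q, ((k : ℕ) : ℤ) = kk p := by
  obtain ⟨q', hq'p, hq'ne, hbet', k, hk, hkkp⟩ := h
  have heq : q' = q := by
    rcases lt_trichotomy q' q with h' | h' | h'
    · rw [hbet' q h' hq] at hqne; exact absurd hqne (by simp)
    · exact h'
    · rw [hbet q' h' hq'p] at hq'ne; exact absurd hq'ne (by simp)
  rw [heq] at hk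
  exact ⟨k, hk, hkkp⟩
end

/-- The number of local trees of process `p` satisfies
`n_p = |O[p+1]| - k_p`. -/
theorem offset_array_local_tree_count (K P : ℕ) (hK : 1 ≤ K) (hP : 1 ≤ P)
    (f : Fin P → Finset (Fin K))
    (hcov : ∀ k : Fin K, ∃ p, k ∈ f p)
    (hi : ∀ p (h : (f p).Nonempty),
        f p = Finset.Icc ((f p).min' h) ((f p).max' h))
    (hii : ∀ p q (hp : (f p).Nonempty) (hq : (f q).Nonempty),
        p < q → (f p).max' hp ≤ (f q).min' hq)
    (hiii : ∀ p q : Fin P, p ≠ q → ∀ k (hk : k ∈ f p), k ∈ f q →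
        k = (f p).min' ⟨k, hk⟩ ∨ k = (f p).max' ⟨k, hk⟩)
    (kk KK : Fin P → ℤ)
    (hkk : ∀ p (h : (f p).Nonempty), kk p = (((f p).min' h : ℕ) : ℤ))
    (hKK : ∀ p (h : (f p).Nonempty), KK p = (((f p).max' h : ℕ) : ℤ))
    (hempty0 : ∀ p : Fin P, f p = ∅ → (∀ q : Fin P, q < p → f q = ∅) →
        kk p = 0 ∧ KK p = -1)
    (hemptyq : ∀ p q : Fin P, f p = ∅ → q < p → (f q).Nonempty →
        (∀ r : Fin P, q < r → r < p → f r = ∅) → kk p = KK q + 1 ∧ KK p = KK q)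
    (O : ℕ → ℤ)
    (hOP : O P = (K : ℤ))
    (hO1 : ∀ p : Fin P, (f p = ∅ ∨ ¬ SharedWith f kk p) → O (p : ℕ) = kk p)
    (hO2 : ∀ p : Fin P, f p ≠ ∅ → SharedWith f kk p → O (p : ℕ) = -(kk p) - 1) :
    ∀ p : Fin P, ((f p).card : ℤ) = |O ((p : ℕ) + 1)| - kk p := by
  intro p
  by_cases hp1 : (p : ℕ) + 1 < P
  · set p' : Fin P := ⟨(p : ℕ) + 1, hp1⟩ with hp'def
    have hp'v : (p' : ℕ) = (p : ℕ) + 1 := rfl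
    have hplt : p < p' := by
      show (p : ℕ) < (p' : ℕ)
      omega
    by_cases hpe : (f p).Nonempty
    · -- f p nonempty
      have hcard := interval_card hi p hpe
      have hkkp := hkk p hpe
      have hbet : ∀ r : Fin P, p < r → r < p' → f r = ∅ := by
        intro r h1 h2
        have a : (p : ℕ) < (r : ℕ) := h1
        have b : (r : ℕ) < (p' : ℕ) := h2
        omega
      have key : |O ((p : ℕ) + 1)| = (((f p).max' hpe : ℕ) : ℤ) + 1 := by
        by_cases hp'e : (f p').Nonempty
        · have hkkp' := hkk p' hp'e
          have hle2 : ((f p).max' hpe : ℕ) ≤ ((f p').min' hp'e : ℕ) :=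
            hii p p' hpe hp'e hplt
          by_cases hsh : SharedWith f kk p'
          · obtain ⟨k, hk, hkval⟩ := shared_witness hplt hpe hbet hsh
            have hkm : ((k : ℕ) : ℤ) = (((f p').min' hp'e : ℕ) : ℤ) := by
              rw [hkval, hkkp']
            have hkm' : (k : ℕ) = ((f p').min' hp'e : ℕ) := by exact_mod_cast hkm
            have hle1 : ((f p').min' hp'e : ℕ) ≤ ((f p).max' hpe : ℕ) := by
              rw [← hkm']; exact Finset.le_max' _ _ hk
            have hO : O ((p : ℕ) + 1) = -(kk p') - 1 :=
              hO2 p' (Finset.nonempty_iff_ne_empty.mp hp'e) hsh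
            rw [hO, hkkp', abs_of_nonpos (by omega)]
            push_cast
            omega
          · have hO : O ((p : ℕ) + 1) = kk p' := hO1 p' (Or.inr hsh)
            have hgap := no_gap hcov hii p p' hplt hpe hp'e hbet
            have hne : ((f p').min' hp'e : ℕ) ≠ ((f p).max' hpe : ℕ) := by
              intro heq
              apply hsh
              refine ⟨p, hplt, hpe, hbet, (f p').min' hp'e, ?_, (hkk p' hp'e).symm⟩
              have : (f p').min' hp'e = (f p).max' hpe := Fin.ext heq
              rw [this]; exact (f p).max'_mem hpe
            rw [hO, hkkp', abs_of_nonneg (by positivity)]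
            push_cast
            omega
        · -- f p' empty
          have hp'emp : f p' = ∅ := Finset.not_nonempty_iff_eq_empty.mp hp'e
          have hO : O ((p : ℕ) + 1) = kk p' := hO1 p' (Or.inl hp'emp)
          have hkkp' := (hemptyq p' p hp'emp hplt hpe hbet).1
          have hKKp := hKK p hpe
          rw [hO, hkkp', hKKp, abs_of_nonneg (by positivity)]
      rw [hcard, key, hkkp]
      ring
    · -- f p empty
      have hpemp : f p = ∅ := Finset.not_nonempty_iff_eq_empty.mp hpe
      have key : |O ((p : ℕ) + 1)| = kk p := by
        rcases largest_below f p with hall | ⟨q, hqp, hqne, hbetq⟩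
        · -- all processes below p empty
          have hkkp : kk p = 0 := (hempty0 p hpemp hall).1
          have hallp' : ∀ s : Fin P, s < p' → f s = ∅ := by
            intro s hs
            have b : (s : ℕ) < (p' : ℕ) := hs
            rcases lt_or_eq_of_le (Nat.lt_succ_iff.mp (by omega : (s:ℕ) < (p:ℕ)+1)) with h | h
            · exact hall s h
            · have : s = p := Fin.ext h
              rw [this]; exact hpemp
          by_cases hp'e : (f p').Nonempty
          · have hsh : ¬ SharedWith f kk p' := by
              rintro ⟨q', hq'p, hq'ne, -, -⟩
              rw [hallp' q' hq'p] at hq'ne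
              exact absurd hq'ne (by simp)
            have hO : O ((p : ℕ) + 1) = kk p' := hO1 p' (Or.inr hsh)
            have hmin := first_min hcov hii hK p' hp'e hallp'
            rw [hO, hkk p' hp'e, hkkp, hmin]
            simp
          · have hp'emp : f p' = ∅ := Finset.not_nonempty_iff_eq_empty.mp hp'e
            have hO : O ((p : ℕ) + 1) = kk p' := hO1 p' (Or.inl hp'emp)
            have hkkp' : kk p' = 0 := (hempty0 p' hp'emp hallp').1
            rw [hO, hkkp', hkkp]
            simp
        · -- q is the largest nonempty process below p
          have hkkp : kk p = KK q + 1 := (hemptyq p q hpemp hqp hqne hbetq).1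
          have hKKq := hKK q hqne
          have hqp' : q < p' := lt_trans hqp hplt
          have hbetq' : ∀ r : Fin P, q < r → r < p' → f r = ∅ := by
            intro r h1 h2
            have b : (r : ℕ) < (p' : ℕ) := h2
            rcases lt_or_eq_of_le (Nat.lt_succ_iff.mp (by omega : (r:ℕ) < (p:ℕ)+1)) with h | h
            · exact hbetq r h1 (by exact h)
            · have : r = p := Fin.ext h
              rw [this]; exact hpemp
          by_cases hp'e : (f p').Nonempty
          · have hkkp' := hkk p' hp'e
            have hle2 : ((f q).max' hqne : ℕ) ≤ ((f p').min' hp'e : ℕ) :=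
              hii q p' hqne hp'e hqp'
            by_cases hsh : SharedWith f kk p'
            · obtain ⟨k, hk, hkval⟩ := shared_witness hqp' hqne hbetq' hsh
              have hkm : ((k : ℕ) : ℤ) = (((f p').min' hp'e : ℕ) : ℤ) := by
                rw [hkval, hkkp']
              have hkm' : (k : ℕ) = ((f p').min' hp'e : ℕ) := by exact_mod_cast hkm
              have hle1 : ((f p').min' hp'e : ℕ) ≤ ((f q).max' hqne : ℕ) := by
                rw [← hkm']; exact Finset.le_max' _ _ hk
              have hO : O ((p : ℕ) + 1) = -(kk p') - 1 :=
                hO2 p' (Finset.nonempty_iff_ne_empty.mp hp'e) hsh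
              rw [hO, hkkp', abs_of_nonpos (by omega), hkkp, hKKq]
              push_cast
              omega
            · have hO : O ((p : ℕ) + 1) = kk p' := hO1 p' (Or.inr hsh)
              have hgap := no_gap hcov hii q p' hqp' hqne hp'e hbetq'
              have hne : ((f p').min' hp'e : ℕ) ≠ ((f q).max' hqne : ℕ) := by
                intro heq
                apply hsh
                refine ⟨q, hqp', hqne, hbetq', (f p').min' hp'e, ?_, (hkk p' hp'e).symm⟩
                have : (f p').min' hp'e = (f q).max' hqne := Fin.ext heq
                rw [this]; exact (f q).max'_mem hqne
              rw [hO, hkkp', abs_of_nonneg (by positivity), hkkp, hKKq]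
              push_cast
              omega
          · have hp'emp : f p' = ∅ := Finset.not_nonempty_iff_eq_empty.mp hp'e
            have hO : O ((p : ℕ) + 1) = kk p' := hO1 p' (Or.inl hp'emp)
            have hkkp' : kk p' = KK q + 1 := (hemptyq p' q hp'emp hqp' hqne hbetq').1
            rw [hO, hkkp', hkkp, hKKq, abs_of_nonneg (by positivity)]
      rw [hpemp, key]
      simp
  · -- p is the last process: (p : ℕ) + 1 = P
    have hPeq : (p : ℕ) + 1 = P := by have := p.isLt; omega
    rw [hPeq, hOP]
    by_cases hpe : (f p).Nonempty
    · have hcard := interval_card hi p hpe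
      have hkkp := hkk p hpe
      have hlast : ∀ r : Fin P, p < r → f r = ∅ := by
        intro r h1
        have a : (p : ℕ) < (r : ℕ) := h1
        have := r.isLt
        omega
      have hmax := last_max hcov hii hK p hpe hlast
      rw [hcard, hkkp, abs_of_nonneg (by positivity), hmax]
      push_cast
      omega
    · have hpemp : f p = ∅ := Finset.not_nonempty_iff_eq_empty.mp hpe
      have key : kk p = (K : ℤ) := by
        rcases largest_below f p with hall | ⟨q, hqp, hqne, hbetq⟩
        · exfalso
          obtain ⟨s, hs⟩ := hcov ⟨0, by omega⟩
          have hsv := s.isLt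
          rcases lt_or_eq_of_le (Nat.lt_succ_iff.mp (by omega : (s:ℕ) < (p:ℕ)+1)) with h | h
          · rw [hall s h] at hs; exact absurd hs (Finset.notMem_empty _)
          · have : s = p := Fin.ext h
            rw [this, hpemp] at hs; exact absurd hs (Finset.notMem_empty _)
        · have hkkp : kk p = KK q + 1 := (hemptyq p q hpemp hqp hqne hbetq).1
          have hKKq := hKK q hqne
          have hlast : ∀ r : Fin P, q < r → f r = ∅ := by
            intro r h1
            have := r.isLt
            rcases lt_or_eq_of_le (Nat.lt_succ_iff.mp (by omega : (r:ℕ) < (p:ℕ)+1)) with h | h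
            · exact hbetq r h1 (by exact h)
            · have : r = p := Fin.ext h
              rw [this]; exact hpemp
          have hmax := last_max hcov hii hK q hqne hlast
          rw [hkkp, hKKq, hmax]
          push_cast
          omega
      rw [hpemp, key, abs_of_nonneg (by positivity)]
      simp
end

section
/- Fix a maximum level 𝓛 ∈ ℕ and let m denote the 2D Morton index. If the quadrilateral element (x', y', ℓ') is a descendant of the quadrilateral element (x, y, ℓ), then m(x, y) ≤ m(x', y'). -/
/-- The 2D Morton index: bitwise interleaving of the binary digits of `x` and
`y` (with `L` digits). -/
def morton (L x y : ℕ) : ℕ :=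
  ∑ i ∈ Finset.range L, ((x / 2 ^ i % 2) + 2 * (y / 2 ^ i % 2)) * 4 ^ i

/-- A quadrilateral element of level `l` in the 1:4 refinement of
`[0, 2^L]²` with maximum level `L`: anchor coordinates `(x, y)` divisible by
`2^(L - l)`. -/
def IsElement (L l x y : ℕ) : Prop :=
  l ≤ L ∧ x < 2 ^ L ∧ y < 2 ^ L ∧ 2 ^ (L - l) ∣ x ∧ 2 ^ (L - l) ∣ y

/-- The element `(x', y')` of level `l'` is a descendant of the element
`(x, y)` of level `l`. -/
def Descendant (L l x y l' x' y' : ℕ) : Prop :=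
  l ≤ l' ∧ x ≤ x' ∧ x' < x + 2 ^ (L - l) ∧ y ≤ y' ∧ y' < y + 2 ^ (L - l)

/-- Low bits of a multiple of `2^k` vanish. -/
lemma bit_zero_of_dvd {k i x : ℕ} (h : i < k) (hd : 2 ^ k ∣ x) :
    x / 2 ^ i % 2 = 0 := by
  obtain ⟨c, rfl⟩ := hd
  have hk : 2 ^ k = 2 ^ i * 2 ^ (k - i) := by
    rw [← pow_add]; congr 1; omega
  rw [hk, mul_assoc, Nat.mul_div_cancel_left _ (by positivity)]
  have : 2 ∣ 2 ^ (k - i) * c := by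
    exact Dvd.dvd.mul_right (dvd_pow_self 2 (by omega)) c
  omega

/-- High quotients of a multiple of `2^k` plus a small offset. -/
lemma div_add_small {k i c a : ℕ} (hki : k ≤ i) (ha : a < 2 ^ k) :
    (2 ^ k * c + a) / 2 ^ i = 2 ^ k * c / 2 ^ i := by
  have hi : 2 ^ i = 2 ^ k * 2 ^ (i - k) := by
    rw [← pow_add]; congr 1; omega
  rw [hi, ← Nat.div_div_eq_div_mul, ← Nat.div_div_eq_div_mul]
  congr 1
  rw [mul_comm (2 ^ k) c, add_comm, Nat.add_mul_div_right _ _ (by positivity),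
    Nat.mul_div_cancel _ (by positivity), Nat.div_eq_of_lt ha, zero_add]

/-- Descendants have Morton index at least that of their ancestor. -/
theorem morton_le_of_descendant (L l l' x y x' y' : ℕ)
    (hE : IsElement L l x y) (hE' : IsElement L l' x' y')
    (hdesc : Descendant L l x y l' x' y') :
    morton L x y ≤ morton L x' y' := by
  obtain ⟨hl, hx, hy, hdx, hdy⟩ := hE
  obtain ⟨hll, hxx, hxlt, hyy, hylt⟩ := hdesc
  set k := L - l with hk
  apply Finset.sum_le_sum
  intro i _
  rcases lt_or_ge i k with h | h
  · rw [bit_zero_of_dvd h hdx, bit_zero_of_dvd h hdy]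
    simp
  · obtain ⟨c, hc⟩ := hdx
    obtain ⟨d, hd⟩ := hdy
    have hx' : x' / 2 ^ i = x / 2 ^ i := by
      have : x' = 2 ^ k * c + (x' - x) := by omega
      rw [this, div_add_small h (by omega), ← hc]
    have hy' : y' / 2 ^ i = y / 2 ^ i := by
      have : y' = 2 ^ k * d + (y' - y) := by omega
      rw [this, div_add_small h (by omega), ← hd]
    rw [hx', hy']
end

section
/- Fix a maximum level 𝓛 ∈ ℕ and let m denote the 2D Morton index. Let (x, y, ℓ) and (x', y', ℓ') be quadrilateral elements with ℓ ≤ ℓ' ≤ 𝓛. Then (x', y', ℓ') is a descendant of (x, y, ℓ) if and only if m(x, y) ≤ m(x', y') < m(x, y) + 4^{𝓛−ℓ}. -/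
/-!
With `k = L - l`, splitting the digits at position `k` gives
`m(x, y) = m_k(x, y) + 4^k * m_(L-k)(x / 2^k, y / 2^k)`, and the low part vanishes for anchors
of level `l`. Hence the descendant condition says `(x' / 2^k, y' / 2^k) = (x / 2^k, y / 2^k)`,
the Morton range condition says `m(x', y') / 4^k = m(x, y) / 4^k`, and the two are equivalent
because the Morton index is injective on `[0, 2^(L-k))²`.
-/

lemma Nat.le_and_lt_add_iff_div_eq {a b d : ℕ} (hd : 0 < d) (hda : d ∣ a) :
    a ≤ b ∧ b < a + d ↔ b / d = a / d := by
  obtain ⟨c, rfl⟩ := hda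
  rw [Nat.mul_div_cancel_left _ hd, Nat.div_eq_iff hd, mul_comm c d]
  omega

lemma morton_add (k d x y : ℕ) :
    morton (k + d) x y = morton k x y + 4 ^ k * morton d (x / 2 ^ k) (y / 2 ^ k) := by
  unfold morton
  rw [Finset.sum_range_add, Finset.mul_sum]
  congr 1
  refine Finset.sum_congr rfl fun i _ => ?_
  rw [Nat.div_div_eq_div_mul, Nat.div_div_eq_div_mul, ← pow_add, pow_add 4 k i]
  ring

lemma morton_succ (L x y : ℕ) :
    morton (L + 1) x y = x % 2 + 2 * (y % 2) + 4 * morton L (x / 2) (y / 2) := by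
  rw [add_comm, morton_add]
  simp [morton]

lemma morton_lt (L x y : ℕ) : morton L x y < 4 ^ L := by
  induction L generalizing x y with
  | zero => simp [morton]
  | succ L ih =>
    rw [morton_succ, pow_succ]
    have := ih (x / 2) (y / 2)
    omega

lemma morton_inj {L x y x' y' : ℕ} (hx : x < 2 ^ L) (hy : y < 2 ^ L)
    (hx' : x' < 2 ^ L) (hy' : y' < 2 ^ L) :
    morton L x y = morton L x' y' ↔ x = x' ∧ y = y' := by
  refine ⟨fun h => ?_, fun ⟨rfl, rfl⟩ => rfl⟩
  induction L generalizing x y x' y' with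
  | zero => simp_all
  | succ L ih =>
    rw [morton_succ, morton_succ] at h
    rw [pow_succ] at hx hy hx' hy'
    have hhigh := ih (x := x / 2) (y := y / 2) (x' := x' / 2) (y' := y' / 2)
      (by omega) (by omega) (by omega) (by omega) (by omega)
    omega

lemma morton_eq_zero_of_dvd {k x y : ℕ} (hx : 2 ^ k ∣ x) (hy : 2 ^ k ∣ y) :
    morton k x y = 0 := by
  have bit_zero : ∀ {z i}, 2 ^ k ∣ z → i < k → z / 2 ^ i % 2 = 0 := fun {_ i} hz hi =>
    Nat.mod_eq_zero_of_dvd <| Nat.dvd_div_of_mul_dvd <| pow_succ 2 i ▸ (pow_dvd_pow 2 hi).trans hz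
  refine Finset.sum_eq_zero fun i hi => ?_
  rw [Finset.mem_range] at hi
  simp [bit_zero hx hi, bit_zero hy hi]

lemma morton_div_four_pow {k L : ℕ} (hk : k ≤ L) (x y : ℕ) :
    morton L x y / 4 ^ k = morton (L - k) (x / 2 ^ k) (y / 2 ^ k) := by
  rw [← Nat.add_sub_cancel' hk, morton_add, Nat.add_sub_cancel_left,
    Nat.add_mul_div_left _ _ (by positivity), Nat.div_eq_of_lt (morton_lt k x y), zero_add]

lemma four_pow_dvd_morton {k L x y : ℕ} (hk : k ≤ L) (hx : 2 ^ k ∣ x) (hy : 2 ^ k ∣ y) :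
    4 ^ k ∣ morton L x y := by
  rw [← Nat.add_sub_cancel' hk, morton_add, morton_eq_zero_of_dvd hx hy, zero_add]
  exact dvd_mul_right _ _

lemma div_two_pow_lt {k L x : ℕ} (hk : k ≤ L) (hx : x < 2 ^ L) : x / 2 ^ k < 2 ^ (L - k) :=
  Nat.div_lt_of_lt_mul <| by rwa [← pow_add, Nat.add_sub_cancel' hk]

/-- Prefix property of the Morton index: `(x', y', l')` is a descendant of
`(x, y, l)` iff its Morton index lies in `[m(x,y), m(x,y) + 4^(L-l))`. -/
theorem descendant_iff_morton_range (L l l' x y x' y' : ℕ)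
    (hE : IsElement L l x y) (hE' : IsElement L l' x' y') (hll : l ≤ l') :
    Descendant L l x y l' x' y' ↔
      morton L x y ≤ morton L x' y' ∧
        morton L x' y' < morton L x y + 4 ^ (L - l) := by
  obtain ⟨-, hx, hy, hdx, hdy⟩ := hE
  obtain ⟨-, hx', hy', -, -⟩ := hE'
  set k := L - l
  have hk : k ≤ L := Nat.sub_le L l
  calc Descendant L l x y l' x' y'
      ↔ (x ≤ x' ∧ x' < x + 2 ^ k) ∧ (y ≤ y' ∧ y' < y + 2 ^ k) :=
        (and_iff_right hll).trans and_assoc.symm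
    _ ↔ x' / 2 ^ k = x / 2 ^ k ∧ y' / 2 ^ k = y / 2 ^ k :=
        and_congr (Nat.le_and_lt_add_iff_div_eq (by positivity) hdx)
          (Nat.le_and_lt_add_iff_div_eq (by positivity) hdy)
    _ ↔ morton (L - k) (x' / 2 ^ k) (y' / 2 ^ k) = morton (L - k) (x / 2 ^ k) (y / 2 ^ k) :=
        (morton_inj (div_two_pow_lt hk hx') (div_two_pow_lt hk hy')
          (div_two_pow_lt hk hx) (div_two_pow_lt hk hy)).symm
    _ ↔ morton L x' y' / 4 ^ k = morton L x y / 4 ^ k := by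
        rw [morton_div_four_pow hk, morton_div_four_pow hk]
    _ ↔ _ := (Nat.le_and_lt_add_iff_div_eq (by positivity) (four_pow_dvd_morton hk hdx hdy)).symm
end
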